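/- Let a ∈ 𝒜 and τ ∈ Ψ_a. Assume (p,c,s) and (p̄,c̄,s̄) are decompositions of σ(a) such that E_{a,(p,c,s)}(τ) and E_{a,(p̄,c̄,s̄)}(τ) are nonempty and E_{a,(p,c,s)}(τ) ∩ E_{a,(p̄,c̄,s̄)}(τ) = ∅. Put D = min{ |z − z'| : z ∈ E_{a,(p,c,s)}(τ), z' ∈ E_{a,(p̄,c̄,s̄)}(τ) }. Then D > 0, and for every sequence (τ_k)_{k≥1} in S¹ with τ_k → τ, liminf_{k→∞} |v_{a,(p,c,s)}(τ_k) − v_{a,(p̄,c̄,s̄)}(τ_k)| / ⟦τ − τ_k⟧ ≥ D. -/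

import Mathlib

open Complex MeasureTheory Filter Set
open scoped BigOperators

noncomputable section

namespace IEMWandering

/-- The half-open unit interval `[0,1)`. -/
def unitIvl : Set ℝ := Set.Ico (0:ℝ) 1

/-- An interval exchange map on `[0,1)`: a bijection of `[0,1)` that is a translation
on each member of a finite partition of `[0,1)` into half-open intervals. -/
structure IEM (A : Type) [Fintype A] where
  T : ℝ → ℝ
  I : A → Set ℝ
  δ : A → ℝ
  isIco : ∀ a, ∃ l u : ℝ, l < u ∧ I a = Set.Ico l u
  subset_unit : ∀ a, I a ⊆ unitIvl
  partition : ∀ t ∈ unitIvl, ∃! a, t ∈ I a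
  translate : ∀ a, ∀ t ∈ I a, T t = t + δ a
  bijOn : Set.BijOn T unitIvl unitIvl

/-- `substIter σ n a = σⁿ(a)`. -/
def substIter {A : Type} (σ : A → List A) : ℕ → A → List A
  | 0, a => [a]
  | n+1, a => ((σ a).map (substIter σ n)).flatten

/-- Applying a substitution to a word. -/
def substW {A : Type} (σ : A → List A) (w : List A) : List A := (w.map σ).flatten

/-- `substIterW σ k w = σᵏ(w)`. -/
def substIterW {A : Type} (σ : A → List A) (k : ℕ) (w : List A) : List A :=
  (substW σ)^[k] w

/-- A substitution is primitive if some power of it maps every letter to a word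
containing every letter. -/
def Primitive {A : Type} (σ : A → List A) : Prop :=
  ∃ n : ℕ, ∀ a b : A, a ∈ substIter σ n b

/-- The matrix `M` of a substitution: `M a b` = number of occurrences of `b` in `σ a`. -/
def substMatrix {A : Type} [Fintype A] [DecidableEq A] (σ : A → List A) :
    Matrix A A ℂ := fun a b => ((σ a).count b : ℂ)

/-- `γ(w) = γ_{w_0} + … + γ_{w_{n-1}}`. -/
def wordSum {A : Type} (γ : A → ℂ) (w : List A) : ℂ := (w.map γ).sum

/-- `γ` is an eigenvector of the substitution matrix for the eigenvalue `β`. -/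
def IsEigenvector {A : Type} [Fintype A] [DecidableEq A] (σ : A → List A) (β : ℂ)
    (γ : A → ℂ) : Prop :=
  γ ≠ 0 ∧ (substMatrix σ).mulVec γ = β • γ

/-- `z` is not a root of unity. -/
def NotRootOfUnity (z : ℂ) : Prop := ∀ n : ℕ, 0 < n → z ^ n ≠ 1

/-- `β/|β|`. -/
def unitDir (β : ℂ) : ℂ := β / ((‖β‖ : ℝ) : ℂ)

/-- A self-similar interval exchange map, together with its renormalization ratio `α`
and its associated substitution `σ`: the first-return map of `T` to `[0,α)`, rescaled
by `α⁻¹`, equals `T`; `(σ a).length` is the first return time `r_a` of `α I_a` to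
`[0,α)` and `T^[m] (α I_a) ⊆ I_{(σ a)_m}` for `m < r_a`. -/
structure SelfSimilarIEM (A : Type) [Fintype A] extends IEM A where
  α : ℝ
  α_pos : 0 < α
  α_lt_one : α < 1
  σ : A → List A
  σ_ne : ∀ a, σ a ≠ []
  visits : ∀ a, ∀ t ∈ I a, ∀ (m : ℕ) (h : m < (σ a).length),
    T^[m] (α * t) ∈ I ((σ a).get ⟨m, h⟩)
  not_first_return : ∀ a, ∀ t ∈ I a, ∀ k : ℕ, 0 < k → k < (σ a).length →
    T^[k] (α * t) ∉ Set.Ico (0:ℝ) α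
  self_similar : ∀ a, ∀ t ∈ I a, T^[(σ a).length] (α * t) = α * T t

/-- An affine interval exchange map on `[0,1)` with positive slopes. -/
structure AffineIEM (A : Type) [Fintype A] where
  f : ℝ → ℝ
  J : A → Set ℝ
  slope : A → ℝ
  intercept : A → ℝ
  slope_pos : ∀ a, 0 < slope a
  isIco : ∀ a, ∃ l u : ℝ, l < u ∧ J a = Set.Ico l u
  subset_unit : ∀ a, J a ⊆ unitIvl
  partition : ∀ t ∈ unitIvl, ∃! a, t ∈ J a
  affine : ∀ a, ∀ t ∈ J a, f t = slope a * t + intercept a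
  bijOn : Set.BijOn f unitIvl unitIvl

/-- `h` realizes a semi-conjugacy from `f` to `T`:
it is continuous, surjective, nondecreasing and `h ∘ f = T ∘ h` on `[0,1)`. -/
def SemiConjWith (T f h : ℝ → ℝ) : Prop :=
  ContinuousOn h unitIvl ∧ Set.SurjOn h unitIvl unitIvl ∧ MonotoneOn h unitIvl ∧
    Set.MapsTo h unitIvl unitIvl ∧ ∀ t ∈ unitIvl, h (f t) = T (h t)

/-- `f` is semi-conjugate with `T`. -/
def SemiConjugate (T f : ℝ → ℝ) : Prop := ∃ h, SemiConjWith T f h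

/-- `f` has a wandering interval: a nondegenerate interval whose forward iterates
are pairwise disjoint. -/
def HasWanderingInterval (f : ℝ → ℝ) : Prop :=
  ∃ u v : ℝ, u < v ∧ Set.Ico u v ⊆ unitIvl ∧
    ∀ m n : ℕ, m ≠ n → Disjoint (f^[m] '' Set.Ico u v) (f^[n] '' Set.Ico u v)

/-- Membership in the substitution subshift `Ω_σ`: every finite subword of `ω`
occurs in some `σⁿ(a)`. -/
def InOmega {A : Type} (σ : A → List A) (ω : ℤ → A) : Prop :=
  ∀ (m : ℤ) (len : ℕ), ∃ (n : ℕ) (a : A),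
    (List.ofFn fun i : Fin len => ω (m + (i.val : ℤ))) <:+: substIter σ n a

/-- The word `ω_n … ω_m`. -/
def segment {A : Type} (ω : ℤ → A) (n m : ℤ) : List A :=
  List.ofFn fun i : Fin (m - n + 1).toNat => ω (n + (i.val : ℤ))

/-- `γ_n(ω)`: the Birkhoff-like sums of `γ` along `ω`. -/
def gammaZ {A : Type} (γ : A → ℂ) (ω : ℤ → A) (n : ℤ) : ℂ :=
  if 0 ≤ n then ∑ i ∈ Finset.range n.toNat, γ (ω (i : ℤ))
  else -∑ i ∈ Finset.range (-n).toNat, γ (ω (n + (i : ℤ)))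

/-- `ω` is a minimal sequence for `γ`. -/
def MinimalSeq {A : Type} (σ : A → List A) (γ : A → ℂ) (ω : ℤ → A) : Prop :=
  InOmega σ ω ∧ ∀ n : ℤ, 0 ≤ (gammaZ γ ω n).re

/-- Triples `(p, c, s)` of a prefix, a central letter and a suffix. -/
abbrev Triple (A : Type) := List A × A × List A

/-- The set `𝒮_a` of reversed prefix-suffix expansions at `a` (indexed from `0`,
so `x m` is the triple `(p_{m+1}, c_{m+1}, s_{m+1})`). -/
def InS {A : Type} (σ : A → List A) (a : A) (x : ℕ → Triple A) : Prop :=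
  σ a = (x 0).1 ++ (x 0).2.1 :: (x 0).2.2 ∧
  ∀ m : ℕ, σ ((x m).2.1) = (x (m+1)).1 ++ (x (m+1)).2.1 :: (x (m+1)).2.2

/-- `z_a(x) = Σ_{m≥1} β^{-m} γ(p_m)`. -/
def zrep {A : Type} (β : ℂ) (γ : A → ℂ) (x : ℕ → Triple A) : ℂ :=
  ∑' m : ℕ, β⁻¹ ^ (m + 1) * wordSum γ (x m).1

/-- `z_a^{(n)}(x) = Σ_{m=1}^n β^{-m} γ(p_m)`. -/
def zrepN {A : Type} (β : ℂ) (γ : A → ℂ) (n : ℕ) (x : ℕ → Triple A) : ℂ :=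
  ∑ m ∈ Finset.range n, β⁻¹ ^ (m + 1) * wordSum γ (x m).1

/-- The fractal `𝔉_a`. -/
def Frac {A : Type} (σ : A → List A) (β : ℂ) (γ : A → ℂ) (a : A) : Set ℂ :=
  { z | ∃ x, InS σ a x ∧ zrep β γ x = z }

/-- The finite approximation `𝔉_a^{(n)}`. -/
def FracN {A : Type} (σ : A → List A) (β : ℂ) (γ : A → ℂ) (n : ℕ) (a : A) : Set ℂ :=
  { z | ∃ x, InS σ a x ∧ zrepN β γ n x = z }

/-- `v_a(τ) = min_{z ∈ 𝔉_a} Re(τ z)`. -/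
def vDir {A : Type} (σ : A → List A) (β : ℂ) (γ : A → ℂ) (a : A) (τ : ℂ) : ℝ :=
  sInf ((fun z => (τ * z).re) '' Frac σ β γ a)

/-- `v_a^{(n)}(τ) = min_{z ∈ 𝔉_a^{(n)}} Re(τ z)`. -/
def vDirN {A : Type} (σ : A → List A) (β : ℂ) (γ : A → ℂ) (n : ℕ) (a : A) (τ : ℂ) : ℝ :=
  sInf ((fun z => (τ * z).re) '' FracN σ β γ n a)

/-- The set `E_a(τ)` of extreme points of `𝔉_a` in direction `τ`. -/
def ExtPts {A : Type} (σ : A → List A) (β : ℂ) (γ : A → ℂ) (a : A) (τ : ℂ) : Set ℂ :=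
  { z ∈ Frac σ β γ a | (τ * z).re = vDir σ β γ a τ }

/-- The set `E_a^{(n)}(τ)`. -/
def ExtPtsN {A : Type} (σ : A → List A) (β : ℂ) (γ : A → ℂ) (n : ℕ) (a : A) (τ : ℂ) : Set ℂ :=
  { z ∈ FracN σ β γ n a | (τ * z).re = vDirN σ β γ n a τ }

/-- The unique representation property: every extreme point of every fractal `𝔉_a`
has a unique representation in `𝒮_a`. -/
def URP {A : Type} (σ : A → List A) (β : ℂ) (γ : A → ℂ) : Prop :=
  ∀ (a : A) (τ : ℂ), ‖τ‖ = 1 →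
    ∀ z ∈ ExtPts σ β γ a τ, ∀ x y : ℕ → Triple A,
      InS σ a x → zrep β γ x = z → InS σ a y → zrep β γ y = z → x = y

/-- `(p,c,s)` is a decomposition of `σ(a)`. -/
def IsDecomp {A : Type} (σ : A → List A) (a : A) (d : Triple A) : Prop :=
  σ a = d.1 ++ d.2.1 :: d.2.2

/-- The subfractal `𝔉_{a,(p,c,s)}`: values of representations starting with `(p,c,s)`. -/
def FracDec {A : Type} (σ : A → List A) (β : ℂ) (γ : A → ℂ) (a : A) (d : Triple A) :
    Set ℂ := { z | ∃ x, InS σ a x ∧ x 0 = d ∧ zrep β γ x = z }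

/-- `v_{a,(p,c,s)}(τ)`. -/
def vDec {A : Type} (σ : A → List A) (β : ℂ) (γ : A → ℂ) (a : A) (d : Triple A)
    (τ : ℂ) : ℝ := sInf ((fun z => (τ * z).re) '' FracDec σ β γ a d)

/-- `E_{a,(p,c,s)}(τ) = E_a(τ) ∩ 𝔉_{a,(p,c,s)}`. -/
def EDec {A : Type} (σ : A → List A) (β : ℂ) (γ : A → ℂ) (a : A) (d : Triple A)
    (τ : ℂ) : Set ℂ := ExtPts σ β γ a τ ∩ FracDec σ β γ a d

/-- The set `Ψ_a` of directions with extreme points in two distinct subfractals. -/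
def Psi {A : Type} (σ : A → List A) (β : ℂ) (γ : A → ℂ) (a : A) : Set ℂ :=
  { τ | ‖τ‖ = 1 ∧ ∃ d d' : Triple A, d ≠ d' ∧
      IsDecomp σ a d ∧ IsDecomp σ a d' ∧
      EDec σ β γ a d τ ≠ EDec σ β γ a d' τ ∧
      vDir σ β γ a τ = vDec σ β γ a d τ ∧ vDir σ β γ a τ = vDec σ β γ a d' τ }

/-- The natural (arc) distance between two points of the unit circle. -/
def arcDist (τ τ' : ℂ) : ℝ := |Complex.arg (τ / τ')|

/-- A good eigenvector: directions in `Ψ(γ)` are badly approximated by the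
orbit of `β₀ = β/|β|`. -/
def GoodEigenvector {A : Type} [Fintype A] [DecidableEq A] (σ : A → List A) (β : ℂ)
    (γ : A → ℂ) : Prop :=
  ∀ C : ℝ, 1 < C → ∀ τ ∈ ⋃ a : A, Psi σ β γ a,
    0 < Filter.liminf
      (fun n : ℕ => ((C ^ n * arcDist τ ((unitDir β) ^ n) : ℝ) : EReal)) Filter.atTop

/-- The left shift on sequences of triples. -/
def shiftS {A : Type} (x : ℕ → Triple A) : ℕ → Triple A := fun m => x (m + 1)

/-- The set `E_a^*(τ)` of limit extreme points. -/
def LimitExt {A : Type} (σ : A → List A) (β : ℂ) (γ : A → ℂ) (a : A) (τ : ℂ) :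
    Set ℂ :=
  { z | z ∈ ExtPts σ β γ a τ ∧ ∃ x, InS σ a x ∧ zrep β γ x = z ∧
      ∀ j : ℕ, 0 < j → ∃ (aj : A) (y : ℕ → Triple A), InS σ aj y ∧
        zrep β γ y ∈ ExtPts σ β γ aj ((unitDir β) ^ j * τ) ∧
        (y (j - 1)).2.1 = a ∧ (fun m => y (m + j)) = x }

/-- Minimality of an i.e.m.: every (forward) orbit is dense in `[0,1)`. -/
def MinimalIEM {A : Type} [Fintype A] (T : IEM A) : Prop :=
  ∀ t ∈ unitIvl, ∀ s ∈ unitIvl, ∀ ε : ℝ, 0 < ε → ∃ n : ℕ, |T.T^[n] t - s| < ε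

/-- `ω` is the itinerary of a full (two-sided) orbit of `T`. -/
def IsItinerary {A : Type} [Fintype A] (T : IEM A) (ω : ℤ → A) : Prop :=
  ∃ o : ℤ → ℝ, (∀ n, o n ∈ unitIvl) ∧ (∀ n, T.T (o n) = o (n + 1)) ∧
    ∀ n, o n ∈ T.I (ω n)

/-- Membership in `Ω_T`, the closure (in the product topology) of the set of
itineraries of points of `[0,1)` under `T`. -/
def InOmegaT {A : Type} [Fintype A] (T : IEM A) (ω : ℤ → A) : Prop :=
  ∀ N : ℕ, ∃ ω', IsItinerary T ω' ∧ ∀ n : ℤ, |n| ≤ (N : ℤ) → ω' n = ω n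

/-- The orientation-preserving exchange of the two halves of `[t₀, t₁)`. -/
def halfExchange (t₀ t₁ t : ℝ) : ℝ :=
  if t₀ ≤ t ∧ t < (t₀ + t₁) / 2 then t + (t₁ - t₀) / 2
  else if (t₀ + t₁) / 2 ≤ t ∧ t < t₁ then t - (t₁ - t₀) / 2
  else t

/-- The cubic Arnoux–Yoccoz interval exchange map. -/
def AYmap (α : ℝ) : ℝ → ℝ := fun t =>
  halfExchange 0 1 (halfExchange 0 α (halfExchange α (α + α^2)
    (halfExchange (α + α^2) 1 t)))

/-- The cubic Arnoux–Yoccoz substitution on `{1, …, 9}` (letters `0`-indexed):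
`σ(1)=35, σ(2)=45, σ(3)=46, σ(4)=17, σ(5)=18, σ(6)=19, σ(7)=29, σ(8)=2, σ(9)=3`. -/
def AYsub : Fin 9 → List (Fin 9) :=
  ![[2,4],[3,4],[3,5],[0,6],[0,7],[0,8],[1,8],[1],[2]]

/-- The eigenvector of the Arnoux–Yoccoz matrix for the eigenvalue `β`. -/
def AYvec (β : ℂ) : Fin 9 → ℂ :=
  ![β^2+β+1, -β, -β, -β^2-β-1, β+1, β+1, -β^2-β-2, -1, -1]

end IEMWandering

/-!
Put `u = τ'/τ`, so that `Re (τ' z) = Re u · Re (τ z) - Im u · Im (τ z)`. Both faces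
`E = E_{a,(p,c,s)}(τ)` and `E' = E_{a,(p̄,c̄,s̄)}(τ)` lie on the line `Re (τ z) = v_a(τ)`, so points
of `E` and `E'` are at least `D` apart in `Im (τ ·)`. For `u` near `1`, every `w ∈ E` gives
`v_{a,(p,c,s)}(τ') ≤ Re u · v_a(τ) - Im u · Im (τ w)`, and by compactness a minimiser `z` of
`Re (τ' ·)` on `𝔉_{a,(p,c,s)}` lies within `ε` of `E`, giving
`v_{a,(p,c,s)}(τ') ≥ Re u · v_a(τ) - Im u · Im (τ z)`. Playing these bounds for the two
subfractals against each other yields `|v_{a,(p,c,s)}(τ') - v_{a,(p̄,c̄,s̄)}(τ')| ≥ |Im u| (D - ε)`,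
and `|Im u| = |sin ⟦τ - τ'⟧|`.

The fractals are compact because `𝒮_a` is a closed subset of a product of finite sets on which
`z_a` is a uniform limit of continuous functions.
-/

open Topology

lemma Real.sinc_mul_self (x : ℝ) : Real.sinc x * x = Real.sin x := by
  rcases eq_or_ne x 0 with rfl | hx
  · simp
  · rw [Real.sinc_of_ne_zero hx, div_mul_cancel₀ _ hx]

lemma IsCompact.exists_near_minimizer {X : Type*} [PseudoMetricSpace X] {K : Set X}
    (hK : IsCompact K) {f : X → ℝ} (hf : Continuous f) {v : ℝ} (hv : ∀ z ∈ K, v ≤ f z)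
    {ε : ℝ} (hε : 0 < ε) :
    ∃ δ > 0, ∀ z ∈ K, f z ≤ v + δ → ∃ w ∈ K, f w = v ∧ dist z w < ε := by
  set U := ⋃ w ∈ {w ∈ K | f w = v}, Metric.ball w ε
  have hU : IsOpen U := isOpen_biUnion fun _ _ => Metric.isOpen_ball
  have hlt : ∀ z ∈ K \ U, v < f z := fun z hz => (hv z hz.1).lt_of_ne fun h =>
    hz.2 (mem_biUnion (show z ∈ {w ∈ K | f w = v} from ⟨hz.1, h.symm⟩) (Metric.mem_ball_self hε))
  obtain ⟨v', hvv', hv'⟩ := (hK.diff hU).exists_forall_le' hf.continuousOn hlt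
  refine ⟨(v' - v) / 2, by linarith, fun z hz hfz => ?_⟩
  have hzU : z ∈ U := by_contra fun h => by linarith [hv' z ⟨hz, h⟩]
  obtain ⟨w, ⟨hwK, hwv⟩, hzw⟩ := mem_iUnion₂.1 hzU
  exact ⟨w, hwK, hwv, hzw⟩

lemma IsCompact.sInf_norm_sub_pos {G : Type*} [NormedAddCommGroup G] {E E' : Set G}
    (hE : IsCompact E) (hE' : IsCompact E') (hne : E.Nonempty) (hne' : E'.Nonempty)
    (hdisj : E ∩ E' = ∅) : 0 < sInf {r : ℝ | ∃ z ∈ E, ∃ z' ∈ E', r = ‖z - z'‖} := by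
  have hset : {r : ℝ | ∃ z ∈ E, ∃ z' ∈ E', r = ‖z - z'‖} =
      (fun p : G × G => ‖p.1 - p.2‖) '' E ×ˢ E' := by
    ext r
    constructor
    · rintro ⟨z, hz, z', hz', rfl⟩
      exact ⟨(z, z'), ⟨hz, hz'⟩, rfl⟩
    · rintro ⟨⟨z, z'⟩, ⟨hz, hz'⟩, rfl⟩
      exact ⟨z, hz, z', hz', rfl⟩
  rw [hset]
  obtain ⟨⟨z, z'⟩, ⟨hz, hz'⟩, hmin⟩ :=
    ((hE.prod hE').image (by fun_prop : Continuous fun p : G × G => ‖p.1 - p.2‖)).sInf_mem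
      ((hne.prod hne').image _)
  rw [← hmin]
  exact norm_pos_iff.2 (sub_ne_zero.2 fun h =>
    eq_empty_iff_forall_notMem.1 hdisj z ⟨hz, (show z = z' from h) ▸ hz'⟩)

namespace IEMWandering

lemma abs_mul_sub_le_abs {s t₀ t₀' t₁ t₁' D ε Δ : ℝ} (hD : D ≤ |t₀ - t₀'|)
    (h₁ : |t₁ - t₀| ≤ ε) (h₁' : |t₁' - t₀'| ≤ ε)
    (hΔ : s * (t₀' - t₁) ≤ Δ) (hΔ' : s * (t₀ - t₁') ≤ -Δ) : |s| * (D - ε) ≤ |Δ| := by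
  rw [abs_le] at h₁ h₁'
  rcases le_abs.1 hD with h | h <;> rcases abs_cases s with ⟨hs, hs0⟩ | ⟨hs, hs0⟩ <;> rw [hs] <;>
    nlinarith [le_abs_self Δ, neg_abs_le Δ]

section Support

-- `vDir σ β γ a τ` and `vDec σ β γ a d τ` unfold to `minRe` of `Frac σ β γ a`, `FracDec σ β γ a d`.
def minRe (L : Set ℂ) (u : ℂ) : ℝ := sInf ((fun w => (u * w).re) '' L)

lemma minRe_le {L : Set ℂ} (hL : IsCompact L) (u : ℂ) {w : ℂ} (hw : w ∈ L) :
    minRe L u ≤ (u * w).re :=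
  csInf_le (hL.image (by fun_prop)).bddBelow ⟨w, hw, rfl⟩

variable {L : Set ℂ} {v : ℝ}

lemma eventually_exists_minRe_eq_near_face (hL : IsCompact L) (hvL : ∀ w ∈ L, v ≤ w.re)
    (hF : ∃ w ∈ L, w.re = v) {ε : ℝ} (hε : 0 < ε) :
    ∀ᶠ u in 𝓝 (1 : ℂ), ∃ z ∈ L, minRe L u = (u * z).re ∧
      ∃ w ∈ L, w.re = v ∧ |z.im - w.im| < ε := by
  obtain ⟨δ, hδ, hnear⟩ := hL.exists_near_minimizer continuous_re hvL hε
  obtain ⟨R, hR⟩ := hL.isBounded.exists_norm_le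
  obtain ⟨w₀, hw₀, hw₀v⟩ := hF
  have hre : ∀ᶠ u in 𝓝 (1 : ℂ), 1 / 2 < u.re :=
    (continuous_re.tendsto 1).eventually_const_lt (by norm_num)
  have him : ∀ᶠ u in 𝓝 (1 : ℂ), 4 * R * |u.im| < δ :=
    ((by fun_prop : Continuous fun u : ℂ => 4 * R * |u.im|).tendsto 1).eventually_lt_const
      (by simpa using hδ)
  filter_upwards [hre, him] with u hre him
  obtain ⟨z, hz, hmin, hle⟩ :=
    hL.exists_sInf_image_eq_and_le ⟨w₀, hw₀⟩ (f := fun w => (u * w).re) (by fun_prop)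
  have hzv : z.re ≤ v + δ := by
    have h₁ : u.re * z.re - u.im * z.im ≤ u.re * v - u.im * w₀.im := by
      simpa [mul_re, hw₀v] using hle w₀ hw₀
    have h₂ : |z.im - w₀.im| ≤ 2 * R := by
      linarith [abs_sub (z.im) (w₀.im), (abs_im_le_norm z).trans (hR z hz),
        (abs_im_le_norm w₀).trans (hR w₀ hw₀)]
    have h₃ : u.im * (z.im - w₀.im) ≤ |u.im| * (2 * R) :=
      (le_abs_self _).trans (by rw [abs_mul]; gcongr)
    nlinarith [mul_nonneg (by linarith : (0 : ℝ) ≤ u.re - 1 / 2) (sub_nonneg.2 (hvL z hz))]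
  obtain ⟨w, hw, hwv, hzw⟩ := hnear z hz hzv
  refine ⟨z, hz, hmin, w, hw, hwv, lt_of_le_of_lt ?_ hzw⟩
  rw [dist_eq, ← sub_im]
  exact abs_im_le_norm _

theorem eventually_abs_im_mul_le_abs_minRe_sub {L' : Set ℂ} (hL : IsCompact L)
    (hL' : IsCompact L') (hvL : ∀ w ∈ L, v ≤ w.re) (hvL' : ∀ w ∈ L', v ≤ w.re)
    (hF : ∃ w ∈ L, w.re = v) (hF' : ∃ w ∈ L', w.re = v) {D : ℝ}
    (hsep : ∀ w ∈ L, w.re = v → ∀ w' ∈ L', w'.re = v → D ≤ |w.im - w'.im|)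
    {ε : ℝ} (hε : 0 < ε) :
    ∀ᶠ u in 𝓝 (1 : ℂ), |u.im| * (D - ε) ≤ |minRe L u - minRe L' u| := by
  have hre : ∀ᶠ u in 𝓝 (1 : ℂ), 0 < u.re :=
    (continuous_re.tendsto 1).eventually_const_lt (by norm_num)
  filter_upwards [eventually_exists_minRe_eq_near_face hL hvL hF hε,
    eventually_exists_minRe_eq_near_face hL' hvL' hF' hε, hre]
    with u ⟨z, hz, hm, w, hw, hwv, hzw⟩ ⟨z', hz', hm', w', hw', hw'v, hzw'⟩ hu
  have hlow : u.re * v - u.im * z.im ≤ minRe L u := by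
    rw [hm, mul_re]; nlinarith [hvL z hz]
  have hlow' : u.re * v - u.im * z'.im ≤ minRe L' u := by
    rw [hm', mul_re]; nlinarith [hvL' z' hz']
  have hup : minRe L u ≤ u.re * v - u.im * w.im := by
    simpa [mul_re, hwv] using minRe_le hL u hw
  have hup' : minRe L' u ≤ u.re * v - u.im * w'.im := by
    simpa [mul_re, hw'v] using minRe_le hL' u hw'
  exact abs_mul_sub_le_abs (hsep w hw hwv w' hw' hw'v) hzw.le hzw'.le (by linarith) (by linarith)

end Support

lemma eventually_mul_abs_arg_le_abs_im {c : ℝ} (hc : c < 1) :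
    ∀ᶠ u in 𝓝 (1 : ℂ), ‖u‖ = 1 → c * |arg u| ≤ |u.im| := by
  have harg : Tendsto arg (𝓝 (1 : ℂ)) (𝓝 0) := by
    simpa using (continuousAt_arg one_mem_slitPlane).tendsto
  filter_upwards [((Real.continuous_sinc.tendsto 0).comp harg).eventually_const_lt
    (by simpa using hc)] with u hu hu1
  rw [show u.im = Real.sin (arg u) by rw [sin_arg, hu1, div_one], ← Real.sinc_mul_self, abs_mul]
  exact mul_le_mul_of_nonneg_right (hu.le.trans (le_abs_self _)) (abs_nonneg _)

lemma eventually_mul_abs_arg_le {g : ℂ → ℝ} {D b : ℝ}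
    (hg : ∀ ε > 0, ∀ᶠ u in 𝓝 (1 : ℂ), |u.im| * (D - ε) ≤ g u) (hb : 0 < b) (hbD : b < D) :
    ∀ᶠ u in 𝓝 (1 : ℂ), ‖u‖ = 1 → b * |arg u| ≤ g u := by
  have hD : 0 < D + b := by linarith
  filter_upwards [hg ((D - b) / 2) (by linarith),
    eventually_mul_abs_arg_le_abs_im (c := b / ((D + b) / 2))
      ((div_lt_one (half_pos hD)).2 (by linarith))] with u hu hc hu1
  calc b * |arg u| = b / ((D + b) / 2) * |arg u| * ((D + b) / 2) := by field_simp
    _ ≤ |u.im| * ((D + b) / 2) := by gcongr; exact hc hu1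
    _ = |u.im| * (D - (D - b) / 2) := by ring
    _ ≤ g u := hu

theorem coe_le_liminf_abs_div_arcDist {f : ℂ → ℝ} {D : ℝ} {τ : ℂ}
    (hf : ∀ ε > 0, ∀ᶠ u in 𝓝 (1 : ℂ), |u.im| * (D - ε) ≤ |f (u * τ)|) (hτ : ‖τ‖ = 1)
    {τk : ℕ → ℂ} (hτk : ∀ k, ‖τk k‖ = 1) (hne : ∀ k, τk k ≠ τ)
    (hlim : Tendsto τk atTop (𝓝 τ)) :
    (D : EReal) ≤ liminf (fun k => ((|f (τk k)| / arcDist τ (τk k) : ℝ) : EReal)) atTop := by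
  have hτ0 : τ ≠ 0 := norm_ne_zero_iff.1 (by rw [hτ]; exact one_ne_zero)
  have hu : Tendsto (fun k => τk k / τ) atTop (𝓝 1) := by
    simpa [div_self hτ0] using hlim.div_const τ
  refine EReal.ge_of_forall_gt_iff_ge.1 fun b hb => le_liminf_of_le (by isBoundedDefault) ?_
  rcases le_or_gt b 0 with hb0 | hb0
  · exact Eventually.of_forall fun k =>
      EReal.coe_le_coe_iff.2 (hb0.trans (by unfold arcDist; positivity))
  filter_upwards [hu.eventually (eventually_mul_abs_arg_le (g := fun u => |f (u * τ)|) hf hb0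
    (EReal.coe_lt_coe_iff.1 hb))] with k hk
  have hk1 : ‖τk k / τ‖ = 1 := by rw [norm_div, hτk, hτ, div_one]
  have harg : 0 < |arg (τk k / τ)| := by
    refine abs_pos.2 fun h => hne k ?_
    rw [← div_eq_one_iff_eq hτ0]
    exact ext_norm_arg (by rw [hk1, norm_one]) (by rw [h, arg_one])
  rw [EReal.coe_le_coe_iff, arcDist, ← inv_div (τk k) τ, abs_arg_inv, le_div_iff₀ harg]
  simpa [div_mul_cancel₀ _ hτ0] using hk hk1

section Fractal

variable {A : Type}

-- `𝒮_a` carries the product of discrete topologies.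
local instance : TopologicalSpace (Triple A) := ⊥
local instance : DiscreteTopology (Triple A) := ⟨rfl⟩

lemma finite_setOf_append_cons (l : List A) :
    {t : Triple A | l = t.1 ++ t.2.1 :: t.2.2}.Finite := by
  refine (l.inits.finite_toSet.prod (l.finite_toSet.prod l.tails.finite_toSet)).subset ?_
  rintro ⟨p, c, s⟩ (rfl : l = p ++ c :: s)
  simp [List.mem_inits, List.mem_tails]

def decompositions (σ : A → List A) : Set (Triple A) := {t | ∃ b, IsDecomp σ b t}

lemma finite_decompositions [Finite A] (σ : A → List A) : (decompositions σ).Finite := by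
  simpa only [decompositions, IsDecomp, ofPred_exists] using
    finite_iUnion fun b => finite_setOf_append_cons (σ b)

lemma InS.mem_decompositions {σ : A → List A} {a : A} {x : ℕ → Triple A} (hx : InS σ a x) (m : ℕ) :
    x m ∈ decompositions σ := by
  cases m with
  | zero => exact ⟨a, hx.1⟩
  | succ n => exact ⟨(x n).2.1, hx.2 n⟩

lemma isClosed_setOf_inS (σ : A → List A) (a : A) :
    IsClosed {x : ℕ → Triple A | InS σ a x} := by
  simp only [InS, ofPred_and, ofPred_forall]
  exact ((isClosed_discrete {t : Triple A | IsDecomp σ a t}).preimage (continuous_apply 0)).inter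
    (isClosed_iInter fun m =>
      (isClosed_discrete {q : Triple A × Triple A | IsDecomp σ q.1.2.1 q.2}).preimage
        ((continuous_apply m).prodMk (continuous_apply (m + 1))))

lemma isCompact_setOf_inS [Finite A] (σ : A → List A) (a : A) :
    IsCompact {x : ℕ → Triple A | InS σ a x} :=
  (isCompact_univ_pi fun _ => (finite_decompositions σ).isCompact).of_isClosed_subset
    (isClosed_setOf_inS σ a) fun _ hx m _ => hx.mem_decompositions m

lemma continuousOn_zrep [Finite A] (σ : A → List A) {β : ℂ} (hβ : 1 < ‖β‖) (γ : A → ℂ) :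
    ContinuousOn (zrep β γ) (univ.pi fun _ => decompositions σ) := by
  obtain ⟨C, hC⟩ := ((finite_decompositions σ).image fun t => ‖wordSum γ t.1‖).bddAbove
  have hβ' : ‖β⁻¹‖ < 1 := by rw [norm_inv]; exact inv_lt_one_of_one_lt₀ hβ
  refine continuousOn_tsum (u := fun m => ‖β⁻¹‖ ^ (m + 1) * C) (fun m => ?_)
    (((summable_nat_add_iff 1).2 (summable_geometric_of_lt_one (norm_nonneg _) hβ')).mul_right C)
    fun m x hx => ?_
  · exact (continuous_const.mul ((continuous_of_discreteTopology (f := fun t : Triple A =>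
      wordSum γ t.1)).comp (continuous_apply m))).continuousOn
  · rw [norm_mul, norm_pow]
    gcongr
    exact hC ⟨x m, hx m trivial, rfl⟩

lemma isCompact_zrep_image [Finite A] {σ : A → List A} {a : A} {β : ℂ} (hβ : 1 < ‖β‖)
    (γ : A → ℂ) {X : Set (ℕ → Triple A)} (hX : IsClosed X) (hXS : X ⊆ {x | InS σ a x}) :
    IsCompact (zrep β γ '' X) :=
  ((isCompact_setOf_inS σ a).of_isClosed_subset hX hXS).image_of_continuousOn
    ((continuousOn_zrep σ hβ γ).mono fun _ hx m _ => (hXS hx).mem_decompositions m)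

lemma isCompact_frac [Finite A] (σ : A → List A) {β : ℂ} (hβ : 1 < ‖β‖) (γ : A → ℂ) (a : A) :
    IsCompact (Frac σ β γ a) :=
  isCompact_zrep_image hβ γ (isClosed_setOf_inS σ a) subset_rfl

lemma isCompact_fracDec [Finite A] (σ : A → List A) {β : ℂ} (hβ : 1 < ‖β‖) (γ : A → ℂ)
    (a : A) (d : Triple A) : IsCompact (FracDec σ β γ a d) := by
  have h := isCompact_zrep_image hβ γ
    ((isClosed_setOf_inS σ a).inter ((isClosed_discrete {d}).preimage (continuous_apply 0)))
    inter_subset_left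
  convert h using 1
  ext z
  simp [FracDec, and_assoc]

lemma fracDec_subset_frac {σ : A → List A} {β : ℂ} {γ : A → ℂ} {a : A} {d : Triple A} :
    FracDec σ β γ a d ⊆ Frac σ β γ a := fun _ ⟨x, hx, _, hz⟩ => ⟨x, hx, hz⟩

lemma mem_eDec_iff {σ : A → List A} {β : ℂ} {γ : A → ℂ} {a : A} {d : Triple A} {τ z : ℂ} :
    z ∈ EDec σ β γ a d τ ↔ z ∈ FracDec σ β γ a d ∧ (τ * z).re = vDir σ β γ a τ :=
  ⟨fun ⟨⟨_, hz⟩, hzd⟩ => ⟨hzd, hz⟩, fun ⟨hzd, hz⟩ => ⟨⟨fracDec_subset_frac hzd, hz⟩, hzd⟩⟩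

variable [Finite A] {σ : A → List A} {β : ℂ} (hβ : 1 < ‖β‖) {γ : A → ℂ} {a : A} {τ : ℂ}
include hβ

lemma vDir_le_re {z : ℂ} (hz : z ∈ Frac σ β γ a) : vDir σ β γ a τ ≤ (τ * z).re :=
  minRe_le (isCompact_frac σ hβ γ a) τ hz

lemma isCompact_eDec (d : Triple A) : IsCompact (EDec σ β γ a d τ) :=
  ((isCompact_frac σ hβ γ a).inter_right (isClosed_eq (by fun_prop) continuous_const)).inter
    (isCompact_fracDec σ hβ γ a d)

theorem eventually_abs_im_mul_le_abs_vDec_sub (hτ : ‖τ‖ = 1) {d d' : Triple A}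
    (hne : (EDec σ β γ a d τ).Nonempty) (hne' : (EDec σ β γ a d' τ).Nonempty) {D : ℝ}
    (hsep : ∀ z ∈ EDec σ β γ a d τ, ∀ z' ∈ EDec σ β γ a d' τ, D ≤ ‖z - z'‖)
    {ε : ℝ} (hε : 0 < ε) :
    ∀ᶠ u in 𝓝 (1 : ℂ), |u.im| * (D - ε) ≤
      |vDec σ β γ a d (u * τ) - vDec σ β γ a d' (u * τ)| := by
  have hrot : ∀ d u, vDec σ β γ a d (u * τ) = minRe ((τ * ·) '' FracDec σ β γ a d) u := by
    intro d u
    simp only [vDec, minRe, image_image, mul_assoc]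
  have hvL : ∀ d, ∀ w ∈ (τ * ·) '' FracDec σ β γ a d, vDir σ β γ a τ ≤ w.re := by
    rintro d _ ⟨z, hz, rfl⟩
    exact vDir_le_re hβ (fracDec_subset_frac hz)
  have hF : ∀ d, (EDec σ β γ a d τ).Nonempty →
      ∃ w ∈ (τ * ·) '' FracDec σ β γ a d, w.re = vDir σ β γ a τ := by
    rintro d ⟨z, hz⟩
    rw [mem_eDec_iff] at hz
    exact ⟨τ * z, mem_image_of_mem _ hz.1, hz.2⟩
  simp only [hrot]
  refine eventually_abs_im_mul_le_abs_minRe_sub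
    ((isCompact_fracDec σ hβ γ a d).image (by fun_prop))
    ((isCompact_fracDec σ hβ γ a d').image (by fun_prop))
    (hvL d) (hvL d') (hF d hne) (hF d' hne') ?_ hε
  rintro _ ⟨z, hz, rfl⟩ hzv _ ⟨z', hz', rfl⟩ hz'v
  calc D ≤ ‖z - z'‖ := hsep z (mem_eDec_iff.2 ⟨hz, hzv⟩) z' (mem_eDec_iff.2 ⟨hz', hz'v⟩)
    _ = ‖τ * z - τ * z'‖ := by rw [← mul_sub, norm_mul, hτ, one_mul]
    _ ≤ |(τ * z - τ * z').re| + |(τ * z - τ * z').im| := norm_le_abs_re_add_abs_im _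
    _ = |(τ * z).im - (τ * z').im| := by
      rw [sub_re, hzv, hz'v, sub_self, abs_zero, zero_add, sub_im]

end Fractal

end IEMWandering

theorem central_lemma_general {A : Type} [Fintype A]
    (σ : A → List A)
    (β : ℂ) (γ : A → ℂ) (hβ : 1 < ‖β‖)
    (a : A) (τ : ℂ) (hτ : τ ∈ IEMWandering.Psi σ β γ a)
    (d d' : IEMWandering.Triple A)
    (hne : (IEMWandering.EDec σ β γ a d τ).Nonempty)
    (hne' : (IEMWandering.EDec σ β γ a d' τ).Nonempty)
    (hdisj : IEMWandering.EDec σ β γ a d τ ∩ IEMWandering.EDec σ β γ a d' τ = ∅)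
    (D : ℝ)
    (hD : D = sInf { r : ℝ | ∃ z ∈ IEMWandering.EDec σ β γ a d τ,
      ∃ z' ∈ IEMWandering.EDec σ β γ a d' τ, r = ‖z - z'‖ }) :
    0 < D ∧
    ∀ τk : ℕ → ℂ, (∀ k, ‖τk k‖ = 1) → (∀ k, τk k ≠ τ) →
      Filter.Tendsto τk Filter.atTop (nhds τ) →
      (D : EReal) ≤ Filter.liminf (fun k : ℕ =>
        ((|IEMWandering.vDec σ β γ a d (τk k) - IEMWandering.vDec σ β γ a d' (τk k)| /
            IEMWandering.arcDist τ (τk k) : ℝ) : EReal)) Filter.atTop := by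
  have hsep : ∀ z ∈ IEMWandering.EDec σ β γ a d τ, ∀ z' ∈ IEMWandering.EDec σ β γ a d' τ,
      D ≤ ‖z - z'‖ := fun z hz z' hz' =>
    hD ▸ csInf_le ⟨0, by rintro _ ⟨_, _, _, _, rfl⟩; exact norm_nonneg _⟩ ⟨z, hz, z', hz', rfl⟩
  refine ⟨hD ▸ (IEMWandering.isCompact_eDec hβ d).sInf_norm_sub_pos
    (IEMWandering.isCompact_eDec hβ d') hne hne' hdisj, fun τk hτk hτkne hlim => ?_⟩
  exact IEMWandering.coe_le_liminf_abs_div_arcDist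
    (f := fun τ' => IEMWandering.vDec σ β γ a d τ' - IEMWandering.vDec σ β γ a d' τ')
    (fun ε hε => IEMWandering.eventually_abs_im_mul_le_abs_vDec_sub hβ hτ.1 hne hne' hsep hε)
    hτ.1 hτk hτkne hlim

/-- **Lemma 6.7.** Let `τ ∈ Ψ_a` and let `(p,c,s)`, `(p̄,c̄,s̄)` be decompositions of
`σ(a)` with `E_{a,(p,c,s)}(τ)`, `E_{a,(p̄,c̄,s̄)}(τ)` nonempty and disjoint, and let
`D` be the minimal distance between them. Then `D > 0` and for every sequence
`τ_k → τ` in `S¹`,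
`liminf_k |v_{a,(p,c,s)}(τ_k) − v_{a,(p̄,c̄,s̄)}(τ_k)| / ⟦τ − τ_k⟧ ≥ D`. -/
theorem central_lemma {A : Type} [Fintype A] [DecidableEq A]
    (σ : A → List A) (hprim : IEMWandering.Primitive σ)
    (β : ℂ) (γ : A → ℂ) (hβ : 1 < ‖β‖)
    (hγ : IEMWandering.IsEigenvector σ β γ)
    (a : A) (τ : ℂ) (hτ : τ ∈ IEMWandering.Psi σ β γ a)
    (d d' : IEMWandering.Triple A)
    (hd : IEMWandering.IsDecomp σ a d) (hd' : IEMWandering.IsDecomp σ a d')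
    (hne : (IEMWandering.EDec σ β γ a d τ).Nonempty)
    (hne' : (IEMWandering.EDec σ β γ a d' τ).Nonempty)
    (hdisj : IEMWandering.EDec σ β γ a d τ ∩ IEMWandering.EDec σ β γ a d' τ = ∅)
    (D : ℝ)
    (hD : D = sInf { r : ℝ | ∃ z ∈ IEMWandering.EDec σ β γ a d τ,
      ∃ z' ∈ IEMWandering.EDec σ β γ a d' τ, r = ‖z - z'‖ }) :
    0 < D ∧
    ∀ τk : ℕ → ℂ, (∀ k, ‖τk k‖ = 1) → (∀ k, τk k ≠ τ) →
      Filter.Tendsto τk Filter.atTop (nhds τ) →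
      (D : EReal) ≤ Filter.liminf (fun k : ℕ =>
        ((|IEMWandering.vDec σ β γ a d (τk k) - IEMWandering.vDec σ β γ a d' (τk k)| /
            IEMWandering.arcDist τ (τk k) : ℝ) : EReal)) Filter.atTop :=
  central_lemma_general σ β γ hβ a τ hτ d d' hne hne' hdisj D hD
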